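/- arXiv:1706.00803 — 2 statements merged into one kernel-verified Lean document; each statement's English description precedes it below -/
import Mathlib

section
/- Let E be a Banach space, A a φ-positive operator on E, and P : ℝⁿ → ℂ with values in S_{φ₁}, φ₁ + φ₂ ≤ φ, φ₁ + φ₂ < π. Then the operator family σ(λ, ξ) = A(A + λ + P(ξ))⁻¹ is uniformly bounded: there is a constant C such that ‖A(A + λ + P(ξ))⁻¹‖_{B(E)} ≤ C for all λ ∈ S_{φ₂} and all ξ ∈ ℝⁿ. -/
/-- `z` lies in the closed sector `S_φ = {λ : |arg λ| ≤ φ} ∪ {0}`. -/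
def inSector (φ : ℝ) (z : ℂ) : Prop := z = 0 ∨ |z.arg| ≤ φ

/-- `A` is a (densely defined, here everywhere defined) φ-positive operator:
`(A + λ)` has a bounded inverse with `‖(A + λ)⁻¹‖ ≤ M (1 + |λ|)⁻¹` for `λ ∈ S_φ`. -/
def IsPhiPositive {E : Type*} [NormedAddCommGroup E] [NormedSpace ℂ E]
    (φ M : ℝ) (A : E →ₗ[ℂ] E) : Prop :=
  ∀ lam : ℂ, inSector φ lam →
    ∃ B : E →L[ℂ] E, (∀ x, B (A x + lam • x) = x) ∧ (∀ x, A (B x) + lam • B x = x) ∧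
      ‖B‖ ≤ M / (1 + ‖lam‖)



open Complex Real

lemma rot_im (z : ℂ) (θ : ℝ) :
    (Complex.exp (-(θ:ℂ) * Complex.I) * z).im = ‖z‖ * Real.sin (z.arg - θ) := by
  conv_lhs => rw [← Complex.norm_mul_exp_arg_mul_I z]
  rw [mul_left_comm, ← Complex.exp_add]
  have h : -(θ:ℂ) * Complex.I + z.arg * Complex.I = ((z.arg - θ : ℝ) : ℂ) * Complex.I := by
    push_cast; ring
  rw [h, Complex.exp_mul_I]
  simp [← Complex.ofReal_sub, ← Complex.ofReal_cos, ← Complex.ofReal_sin, Complex.mul_im, Complex.add_im]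

lemma rot_re (z : ℂ) (θ : ℝ) :
    (Complex.exp (-(θ:ℂ) * Complex.I) * z).re = ‖z‖ * Real.cos (z.arg - θ) := by
  conv_lhs => rw [← Complex.norm_mul_exp_arg_mul_I z]
  rw [mul_left_comm, ← Complex.exp_add]
  have h : -(θ:ℂ) * Complex.I + z.arg * Complex.I = ((z.arg - θ : ℝ) : ℂ) * Complex.I := by
    push_cast; ring
  rw [h, Complex.exp_mul_I]
  simp [← Complex.ofReal_sub, ← Complex.ofReal_cos, ← Complex.ofReal_sin, Complex.mul_re, Complex.add_re]

lemma cos_window {x : ℝ} (h1 : -(3*π/2) < x) (h2 : x < 3*π/2) (hc : 0 < Real.cos x) :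
    |x| < π/2 := by
  by_contra h
  push_neg at h
  rw [le_abs] at h
  rcases h with h | h
  · exact absurd (Real.cos_nonpos_of_pi_div_two_le_of_le h (by linarith)) (by linarith)
  · have := Real.cos_nonpos_of_pi_div_two_le_of_le h (by linarith)
    rw [Real.cos_neg] at this; linarith



lemma sector_add {φ φ₁ φ₂ : ℝ} (hφ₁ : 0 ≤ φ₁) (hφ₂ : 0 ≤ φ₂)
    (h12 : φ₁ + φ₂ ≤ φ) (h12π : φ₁ + φ₂ < Real.pi)
    {a b : ℂ} (ha : inSector φ₂ a) (hb : inSector φ₁ b) :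
    inSector φ (a + b) := by
  have hπ := Real.pi_pos
  by_cases ha0 : a = 0
  · subst ha0
    rcases hb with rfl | hβ
    · exact Or.inl (by simp)
    · exact Or.inr (by simpa using hβ.trans (by linarith))
  by_cases hb0 : b = 0
  · subst hb0
    rcases ha with rfl | hα
    · exact Or.inl (by simp)
    · exact Or.inr (by simpa using hα.trans (by linarith))
  have hα : |a.arg| ≤ φ₂ := ha.resolve_left ha0
  have hβ : |b.arg| ≤ φ₁ := hb.resolve_left hb0
  set α := a.arg with hαdef
  set β := b.arg with hβdef
  have hα1 : -φ₂ ≤ α := (abs_le.1 hα).1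
  have hα2 : α ≤ φ₂ := (abs_le.1 hα).2
  have hβ1 : -φ₁ ≤ β := (abs_le.1 hβ).1
  have hβ2 : β ≤ φ₁ := (abs_le.1 hβ).2
  set γ := (α + β) / 2 with hγdef
  set d := |α - β| with hddef
  have hd0 : 0 ≤ d := abs_nonneg _
  have hd : d ≤ φ₁ + φ₂ := by
    rw [hddef, abs_sub_le_iff]; constructor <;> linarith
  have hdπ : d < Real.pi := lt_of_le_of_lt hd h12π
  have hγabs : |γ| ≤ (φ₁ + φ₂) / 2 := by
    rw [abs_le]; constructor <;> (rw [hγdef]; linarith)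
  have hγ1 := (abs_le.1 hγabs).1
  have hγ2 := (abs_le.1 hγabs).2
  set m := max α β with hmdef
  set m' := min α β with hm'def
  have hmγ : m - γ = d / 2 := by
    rcases le_total α β with h | h
    · rw [hmdef, max_eq_right h, hddef, _root_.abs_of_nonpos (by linarith), hγdef]; ring
    · rw [hmdef, max_eq_left h, hddef, _root_.abs_of_nonneg (by linarith), hγdef]; ring
  have hm'γ : γ - m' = d / 2 := by
    rcases le_total α β with h | h
    · rw [hm'def, min_eq_left h, hddef, _root_.abs_of_nonpos (by linarith), hγdef]; ring
    · rw [hm'def, min_eq_right h, hddef, _root_.abs_of_nonneg (by linarith), hγdef]; ring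
  have hra : 0 < ‖a‖ := by simpa using ha0
  have hrb : 0 < ‖b‖ := by simpa using hb0
  -- real part after rotation by γ is positive
  have hre : 0 < (Complex.exp (-(γ:ℂ) * Complex.I) * (a + b)).re := by
    rw [mul_add, Complex.add_re, rot_re, rot_re]
    have h1 : 0 < Real.cos (α - γ) := by
      apply Real.cos_pos_of_mem_Ioo
      constructor
      · have : -(d/2) ≤ α - γ := by
          rw [hγdef]; rw [hddef]
          rcases le_total α β with h | h
          · rw [_root_.abs_of_nonpos (by linarith)] <;> linarith
          · rw [_root_.abs_of_nonneg (by linarith)] <;> linarith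
        linarith
      · have : α - γ ≤ d/2 := by
          rw [hγdef, hddef]
          rcases le_total α β with h | h
          · rw [_root_.abs_of_nonpos (by linarith)] <;> linarith
          · rw [_root_.abs_of_nonneg (by linarith)] <;> linarith
        linarith
    have h2 : 0 < Real.cos (β - γ) := by
      apply Real.cos_pos_of_mem_Ioo
      constructor
      · have : -(d/2) ≤ β - γ := by
          rw [hγdef, hddef]
          rcases le_total α β with h | h
          · rw [_root_.abs_of_nonpos (by linarith)] <;> linarith
          · rw [_root_.abs_of_nonneg (by linarith)] <;> linarith
        linarith
      · have : β - γ ≤ d/2 := by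
          rw [hγdef, hddef]
          rcases le_total α β with h | h
          · rw [_root_.abs_of_nonpos (by linarith)] <;> linarith
          · rw [_root_.abs_of_nonneg (by linarith)] <;> linarith
        linarith
    positivity
  have hs0 : a + b ≠ 0 := by
    intro h; rw [h, mul_zero] at hre; simp at hre
  have hrs : 0 < ‖a + b‖ := by simpa using hs0
  set ψ := (a + b).arg with hψdef
  have hψIoc1 : -Real.pi < ψ := Complex.neg_pi_lt_arg _
  have hψIoc2 : ψ ≤ Real.pi := Complex.arg_le_pi _
  -- from hre : cos (ψ - γ) > 0
  have hcos : 0 < Real.cos (ψ - γ) := by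
    rw [rot_re] at hre
    by_contra hcon
    push_neg at hcon
    exact absurd hre (not_lt.2 (mul_nonpos_of_nonneg_of_nonpos hrs.le hcon))
  have hψγ : |ψ - γ| < Real.pi/2 := cos_window (by linarith) (by linarith) hcos
  have hψγ1 : -(Real.pi/2) < ψ - γ := (abs_lt.1 hψγ).1
  have hψγ2 : ψ - γ < Real.pi/2 := (abs_lt.1 hψγ).2
  have hmα : m - α ≤ d := by
    rcases le_total α β with h | h
    · rw [hmdef, max_eq_right h, hddef, _root_.abs_of_nonpos (by linarith)] <;> linarith
    · rw [hmdef, max_eq_left h]; linarith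
  have hmβ : m - β ≤ d := by
    rcases le_total α β with h | h
    · rw [hmdef, max_eq_right h]; linarith
    · rw [hmdef, max_eq_left h, hddef, _root_.abs_of_nonneg (by linarith)] <;> linarith
  have hm'α : α - m' ≤ d := by
    rcases le_total α β with h | h
    · rw [hm'def, min_eq_left h]; linarith
    · rw [hm'def, min_eq_right h, hddef, _root_.abs_of_nonneg (by linarith)] <;> linarith
  have hm'β : β - m' ≤ d := by
    rcases le_total α β with h | h
    · rw [hm'def, min_eq_left h, hddef, _root_.abs_of_nonpos (by linarith)] <;> linarith
    · rw [hm'def, min_eq_right h]; linarith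
  -- upper bound : sin (ψ - m) ≤ 0
  have him : (Complex.exp (-(m:ℂ) * Complex.I) * (a + b)).im ≤ 0 := by
    rw [mul_add, Complex.add_im, rot_im, rot_im]
    have h1 : Real.sin (α - m) ≤ 0 :=
      Real.sin_nonpos_of_nonpos_of_neg_pi_le (sub_nonpos.2 (le_max_left α β))
        (by linarith)
    have h2 : Real.sin (β - m) ≤ 0 :=
      Real.sin_nonpos_of_nonpos_of_neg_pi_le (sub_nonpos.2 (le_max_right α β))
        (by linarith)
    have := mul_nonpos_of_nonneg_of_nonpos hra.le h1
    have := mul_nonpos_of_nonneg_of_nonpos hrb.le h2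
    linarith
  have hsinm : Real.sin (ψ - m) ≤ 0 := by
    rw [rot_im] at him
    by_contra hcon
    push_neg at hcon
    exact absurd him (not_le.2 (mul_pos hrs hcon))
  have hψm : ψ ≤ m := by
    by_contra h
    push_neg at h
    have h2 : ψ - m < Real.pi := by linarith
    exact absurd (Real.sin_pos_of_pos_of_lt_pi (by linarith) h2) (by linarith)
  -- lower bound : sin (ψ - m') ≥ 0
  have him' : 0 ≤ (Complex.exp (-(m':ℂ) * Complex.I) * (a + b)).im := by
    rw [mul_add, Complex.add_im, rot_im, rot_im]
    have h1 : 0 ≤ Real.sin (α - m') :=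
      Real.sin_nonneg_of_nonneg_of_le_pi (sub_nonneg.2 (min_le_left α β)) (by linarith)
    have h2 : 0 ≤ Real.sin (β - m') :=
      Real.sin_nonneg_of_nonneg_of_le_pi (sub_nonneg.2 (min_le_right α β)) (by linarith)
    have := mul_nonneg hra.le h1
    have := mul_nonneg hrb.le h2
    linarith
  have hsinm' : 0 ≤ Real.sin (ψ - m') := by
    rw [rot_im] at him'
    by_contra hcon
    push_neg at hcon
    exact absurd him' (not_le.2 (mul_neg_of_pos_of_neg hrs hcon))
  have hψm' : m' ≤ ψ := by
    by_contra h
    push_neg at h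
    have h1 : 0 < m' - ψ := by linarith
    have h2 : m' - ψ < Real.pi := by linarith
    have := Real.sin_pos_of_pos_of_lt_pi h1 h2
    rw [← neg_sub] at this
    rw [Real.sin_neg] at this
    linarith
  refine Or.inr (abs_le.2 ⟨?_, ?_⟩)
  · have : -φ ≤ m' := le_min (by linarith) (by linarith)
    linarith
  · have : m ≤ φ := max_le (by linarith) (by linarith)
    linarith

theorem uniform_bound_A_resolvent {E : Type*} [NormedAddCommGroup E] [NormedSpace ℂ E]
    [CompleteSpace E] (A : E →ₗ[ℂ] E) (φ φ₁ φ₂ M : ℝ)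
    (hφ₁ : 0 ≤ φ₁) (hφ₂ : 0 ≤ φ₂) (hφ : φ < Real.pi)
    (hpos : IsPhiPositive φ M A) (n : ℕ) (P : (Fin n → ℝ) → ℂ)
    (hP : ∀ ξ, inSector φ₁ (P ξ))
    (h12 : φ₁ + φ₂ ≤ φ) (h12π : φ₁ + φ₂ < Real.pi) :
    ∃ C > (0 : ℝ), ∀ lam : ℂ, inSector φ₂ lam → ∀ ξ : Fin n → ℝ,
      ∃ B : E →L[ℂ] E,
        (∀ x, B (A x + (lam + P ξ) • x) = x) ∧
        (∀ x, A (B x) + (lam + P ξ) • B x = x) ∧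
        ∀ x : E, ‖A (B x)‖ ≤ C * ‖x‖ := by
  refine ⟨1 + |M|, by positivity, ?_⟩
  intro lam hlam ξ
  have hsec : inSector φ (lam + P ξ) := sector_add hφ₁ hφ₂ h12 h12π hlam (hP ξ)
  obtain ⟨B, hB1, hB2, hB3⟩ := hpos _ hsec
  refine ⟨B, hB1, hB2, fun x => ?_⟩
  set μ := lam + P ξ with hμ
  set r := ‖μ‖ with hr
  have hr0 : 0 ≤ r := norm_nonneg μ
  have h1r : 0 < 1 + r := by linarith
  have hA : A (B x) = x - μ • B x := eq_sub_of_add_eq (hB2 x)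
  have hBx : ‖B x‖ ≤ M / (1 + r) * ‖x‖ :=
    le_trans (B.le_opNorm x) (mul_le_mul_of_nonneg_right hB3 (norm_nonneg x))
  have hBx' : ‖B x‖ * (1 + r) ≤ |M| * ‖x‖ := by
    have h2 : ‖B x‖ ≤ |M| * ‖x‖ / (1 + r) := by
      calc ‖B x‖ ≤ M / (1 + r) * ‖x‖ := hBx
        _ ≤ |M| / (1 + r) * ‖x‖ := by gcongr; exact le_abs_self M
        _ = |M| * ‖x‖ / (1 + r) := by ring
    calc ‖B x‖ * (1 + r) ≤ |M| * ‖x‖ / (1 + r) * (1 + r) :=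
          mul_le_mul_of_nonneg_right h2 h1r.le
      _ = |M| * ‖x‖ := div_mul_cancel₀ _ h1r.ne'
  have hnorm : ‖A (B x)‖ ≤ ‖x‖ + r * ‖B x‖ := by
    rw [hA]
    calc ‖x - μ • B x‖ ≤ ‖x‖ + ‖μ • B x‖ := norm_sub_le _ _
      _ = ‖x‖ + r * ‖B x‖ := by rw [norm_smul]
  have hfin : r * ‖B x‖ ≤ |M| * ‖x‖ := by nlinarith [norm_nonneg (B x)]
  calc ‖A (B x)‖ ≤ ‖x‖ + r * ‖B x‖ := hnorm
    _ ≤ ‖x‖ + |M| * ‖x‖ := by linarith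
    _ = (1 + |M|) * ‖x‖ := by ring
end

section
/- Suppose the symbol P_t : ℝⁿ → ℂ satisfies: P_t(ξ) ∈ S_{φ₁} (a sector of angle φ₁ < π) and |P_t(ξ)| ≥ γ Σ_{k=1}^n t_k |ξ_k|^m for some γ > 0 and all ξ ∈ ℝⁿ, t_k ∈ (0, t₀]. Let A be a φ-positive operator on a Banach space E with φ₁ + φ₂ ≤ φ, φ₁ + φ₂ < π. Then for every multi-index α with |α| ≤ m there is a constant C_α such that for all λ ∈ S_{φ₂}, ξ ∈ ℝⁿ, t_k ∈ (0,t₀], and u ∈ E: ‖ t(α) |λ|^{1−|α|/m} ξ^α (A + λ + P_t(ξ))⁻¹ u ‖_E ≤ C_α ‖u‖_E, where t(α) = ∏_k t_k^{α_k/m}. -/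
private lemma alg_aux (X Y c s : ℝ) (hX : 0 ≤ X) (hY : 0 ≤ Y) (h : s^2 + c^2 = 1) :
    ((X - Y)*s)^2 ≤ (1 - c^2)*(((X+Y)*c)^2 + ((X-Y)*s)^2) := by
  nlinarith [mul_nonneg (mul_nonneg hX hY) (sq_nonneg (s*c))]

set_option maxHeartbeats 1000000 in
open Real Complex in
lemma sector_add_s11 {φ₁ φ₂ : ℝ} (hφ₁ : 0 ≤ φ₁) (hφ₂ : 0 ≤ φ₂) (hπ : φ₁ + φ₂ < Real.pi)
    {z w : ℂ} (hz : inSector φ₁ z) (hw : inSector φ₂ w) :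
    inSector (φ₁ + φ₂) (z + w) ∧
    Real.cos ((φ₁ + φ₂) / 2) * (‖z‖ + ‖w‖) ≤ ‖z + w‖ := by
  have hcos1 : Real.cos ((φ₁ + φ₂) / 2) ≤ 1 := Real.cos_le_one _
  by_cases hz0 : z = 0
  · subst hz0
    constructor
    · rcases hw with rfl | hb
      · exact Or.inl (by simp)
      · exact Or.inr (by simpa using hb.trans (by linarith))
    · simpa using mul_le_mul_of_nonneg_right hcos1 (norm_nonneg w)
  by_cases hw0 : w = 0
  · subst hw0
    constructor
    · exact Or.inr (by simpa using (hz.resolve_left hz0).trans (by linarith))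
    · simpa using mul_le_mul_of_nonneg_right hcos1 (norm_nonneg z)
  have ha1 := abs_le.1 (hz.resolve_left hz0)
  have hb1 := abs_le.1 (hw.resolve_left hw0)
  set a := z.arg with ha'
  set b := w.arg with hb'
  set θ : ℝ := (a + b) / 2 with hθdef
  set d : ℝ := (a - b) / 2 with hddef
  have hπ2 := Real.pi_pos
  have hdle : |d| ≤ (φ₁ + φ₂) / 2 := abs_le.2 ⟨by rw [hddef]; linarith [ha1.1, ha1.2, hb1.1, hb1.2],
    by rw [hddef]; linarith [ha1.1, ha1.2, hb1.1, hb1.2]⟩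
  have hθle : |θ| ≤ (φ₁ + φ₂) / 2 := abs_le.2 ⟨by rw [hθdef]; linarith [ha1.1, ha1.2, hb1.1, hb1.2],
    by rw [hθdef]; linarith [ha1.1, ha1.2, hb1.1, hb1.2]⟩
  have hhalf : (φ₁ + φ₂) / 2 < Real.pi / 2 := by linarith
  have hd1 := abs_le.1 hdle
  have hcosd_pos : 0 < Real.cos d :=
    Real.cos_pos_of_mem_Ioo ⟨by linarith [hd1.1], by linarith [hd1.2]⟩
  have hcosd_ge : Real.cos ((φ₁ + φ₂) / 2) ≤ Real.cos d := by
    rw [← Real.cos_abs d]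
    exact Real.cos_le_cos_of_nonneg_of_le_pi (abs_nonneg d) (by linarith) hdle
  set X := ‖z‖ with hX
  set Y := ‖w‖ with hY
  have hX0 : 0 < X := norm_pos_iff.mpr hz0
  have hY0 : 0 < Y := norm_pos_iff.mpr hw0
  set ζ : ℂ := (X : ℂ) * Complex.exp (d * I) + (Y : ℂ) * Complex.exp (-d * I) with hζdef
  have key : z + w = Complex.exp (θ * I) * ζ := by
    rw [hζdef, mul_add, ← mul_assoc, ← mul_assoc, mul_comm (Complex.exp _) (X:ℂ),
      mul_comm (Complex.exp _) (Y:ℂ), mul_assoc, mul_assoc, ← Complex.exp_add, ← Complex.exp_add]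
    have e1 : (θ:ℂ) * I + (d:ℂ) * I = (a:ℂ) * I := by
      rw [← add_mul]; norm_cast; rw [hθdef, hddef]; push_cast; ring_nf
    have e2 : (θ:ℂ) * I + (-d:ℂ) * I = (b:ℂ) * I := by
      rw [← add_mul]; norm_cast; rw [hθdef, hddef]; push_cast; ring_nf
    rw [e1]
    rw [show (θ:ℂ) * I + -(d:ℂ) * I = (b:ℂ) * I from e2]
    rw [ha', hb', hX, hY, Complex.norm_mul_exp_arg_mul_I, Complex.norm_mul_exp_arg_mul_I]
  have hnsq : Complex.normSq (Complex.cos ↑d + Complex.sin ↑d * I) = 1 := by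
    simp [Complex.normSq_apply, Complex.add_re, Complex.add_im, Complex.mul_re, Complex.mul_im,
      Complex.cos_ofReal_re, Complex.sin_ofReal_re, Complex.cos_ofReal_im, Complex.sin_ofReal_im]
    nlinarith [Real.sin_sq_add_cos_sq d]
  have hre : ζ.re = (X + Y) * Real.cos d := by
    rw [hζdef]
    simp [Complex.exp_mul_I, Complex.add_re, Complex.add_im, Complex.mul_re, Complex.mul_im,
      Complex.cos_ofReal_re, Complex.sin_ofReal_re, Complex.cos_ofReal_im, Complex.sin_ofReal_im,
      Complex.cos_neg, Complex.sin_neg, neg_mul, Complex.exp_neg, hnsq]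
    ring
  have him : ζ.im = (X - Y) * Real.sin d := by
    rw [hζdef]
    simp [Complex.exp_mul_I, Complex.add_re, Complex.add_im, Complex.mul_re, Complex.mul_im,
      Complex.cos_ofReal_re, Complex.sin_ofReal_re, Complex.cos_ofReal_im, Complex.sin_ofReal_im,
      Complex.cos_neg, Complex.sin_neg, neg_mul, Complex.exp_neg, hnsq]
    ring
  have hre_pos : 0 < ζ.re := by rw [hre]; positivity
  have hζne : ζ ≠ 0 := fun h => by simp [h] at hre_pos
  have hζabs_pos : 0 < ‖ζ‖ := norm_pos_iff.mpr hζne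
  have habs : ‖z + w‖ = ‖ζ‖ := by
    rw [key, norm_mul, Complex.norm_exp_ofReal_mul_I, one_mul]
  have hsind_nonneg : 0 ≤ Real.sin |d| :=
    Real.sin_nonneg_of_nonneg_of_le_pi (abs_nonneg d) (by linarith)
  have himsq : ζ.im ^ 2 ≤ (Real.sin |d| * ‖ζ‖) ^ 2 := by
    have e : (Real.sin |d| * ‖ζ‖) ^ 2 =
        (1 - Real.cos d ^ 2) * (((X + Y) * Real.cos d) ^ 2 + ((X - Y) * Real.sin d) ^ 2) := by
      rw [mul_pow, Real.sin_sq, Real.cos_abs, Complex.sq_norm, Complex.normSq_apply, hre, him]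
      ring
    rw [him, e]
    exact alg_aux X Y _ _ hX0.le hY0.le (Real.sin_sq_add_cos_sq d)
  have him_le : |ζ.im| ≤ Real.sin |d| * ‖ζ‖ := by
    have := Real.sqrt_le_sqrt himsq
    rwa [Real.sqrt_sq_eq_abs, Real.sqrt_sq (mul_nonneg hsind_nonneg hζabs_pos.le)] at this
  have hargζ : |ζ.arg| ≤ |d| := by
    rw [Complex.arg_of_re_nonneg hre_pos.le, abs_le]
    have him1 := abs_le.1 him_le
    constructor
    · have h1 : -Real.sin |d| ≤ ζ.im / ‖ζ‖ := by
        rw [le_div_iff₀ hζabs_pos]; linarith [him1.1]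
      calc -|d| = -Real.arcsin (Real.sin |d|) := by
              rw [Real.arcsin_sin (by linarith [abs_nonneg d]) (by linarith)]
        _ = Real.arcsin (-Real.sin |d|) := (Real.arcsin_neg _).symm
        _ ≤ _ := Real.monotone_arcsin h1
    · have h1 : ζ.im / ‖ζ‖ ≤ Real.sin |d| := by
        rw [div_le_iff₀ hζabs_pos]; linarith [him1.2]
      calc Real.arcsin (ζ.im / ‖ζ‖) ≤ Real.arcsin (Real.sin |d|) :=
              Real.monotone_arcsin h1
        _ = |d| := Real.arcsin_sin (by linarith [abs_nonneg d]) (by linarith)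
  set ψ := θ + ζ.arg with hψdef
  have hψle : |ψ| ≤ φ₁ + φ₂ := by
    calc |ψ| ≤ |θ| + |ζ.arg| := abs_add_le _ _
      _ ≤ (φ₁ + φ₂) / 2 + (φ₁ + φ₂) / 2 := add_le_add hθle (hargζ.trans hdle)
      _ = φ₁ + φ₂ := by ring
  have hψ1 := abs_le.1 hψle
  have hargsum : (z + w).arg = ψ := by
    have hzw : z + w = ↑(‖ζ‖) * (Complex.cos ↑ψ + Complex.sin ↑ψ * I) := by
      rw [← Complex.exp_mul_I, key]
      conv_lhs => rw [← Complex.norm_mul_exp_arg_mul_I ζ]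
      rw [show ((ψ:ℝ):ℂ) * I = (θ:ℂ) * I + ((ζ.arg : ℝ):ℂ) * I by
        rw [hψdef]; push_cast; ring]
      rw [Complex.exp_add]; ring
    rw [hzw, Complex.arg_mul_cos_add_sin_mul_I hζabs_pos ⟨by linarith [hψ1.1], by linarith [hψ1.2]⟩]
  constructor
  · exact Or.inr (by rw [hargsum]; exact hψle)
  · rw [habs]
    calc Real.cos ((φ₁ + φ₂) / 2) * (X + Y) ≤ Real.cos d * (X + Y) := by
          apply mul_le_mul_of_nonneg_right hcosd_ge; positivity
      _ = ζ.re := by rw [hre]; ring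
      _ ≤ ‖ζ‖ := Complex.re_le_norm ζ

lemma rpow_weighted {x y s : ℝ} (hx : 0 ≤ x) (hy : 0 ≤ y) (hs0 : 0 ≤ s) (hs1 : s ≤ 1) :
    x ^ (1 - s) * y ^ s ≤ x + y := by
  rcases le_total x y with h | h
  · rcases eq_or_lt_of_le hy with rfl | hy0
    · -- y = 0, so x = 0
      have hx0 : x = 0 := le_antisymm (by simpa using h) hx
      subst hx0
      rcases eq_or_lt_of_le hs0 with rfl | hs0'
      · simp [Real.rpow_one]
      · rw [Real.zero_rpow (ne_of_gt hs0')]; simp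
    · calc x ^ (1 - s) * y ^ s ≤ y ^ (1 - s) * y ^ s :=
            mul_le_mul_of_nonneg_right (Real.rpow_le_rpow hx h (by linarith))
              (Real.rpow_nonneg hy0.le s)
        _ = y := by rw [← Real.rpow_add hy0]; norm_num
        _ ≤ x + y := by linarith
  · rcases eq_or_lt_of_le hx with rfl | hx0
    · have hy0 : y = 0 := le_antisymm (by simpa using h) hy
      subst hy0
      rcases eq_or_lt_of_le hs0 with rfl | hs0'
      · simp [Real.rpow_one]
      · rw [Real.zero_rpow (ne_of_gt hs0')]; simp
    · calc x ^ (1 - s) * y ^ s ≤ x ^ (1 - s) * x ^ s :=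
            mul_le_mul_of_nonneg_left (Real.rpow_le_rpow hy h hs0)
              (Real.rpow_nonneg hx0.le _)
        _ = x := by rw [← Real.rpow_add hx0]; norm_num
        _ ≤ x + y := by linarith

set_option maxHeartbeats 1000000 in
theorem symbol_multiplier_estimate {E : Type*} [NormedAddCommGroup E] [NormedSpace ℂ E]
    [CompleteSpace E] (A : E →ₗ[ℂ] E) (n : ℕ) (φ φ₁ φ₂ M γ t₀ m : ℝ)
    (hm : 0 < m) (hγ : 0 < γ) (ht₀ : 0 < t₀) (hφ₁ : 0 ≤ φ₁) (hφ₂ : 0 ≤ φ₂)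
    (hpos : IsPhiPositive φ M A) (h12 : φ₁ + φ₂ ≤ φ) (h12π : φ₁ + φ₂ < Real.pi)
    (P : (Fin n → ℝ) → (Fin n → ℝ) → ℂ)
    (hPsec : ∀ t ξ : Fin n → ℝ, (∀ k, 0 < t k ∧ t k ≤ t₀) → inSector φ₁ (P t ξ))
    (hPlow : ∀ t ξ : Fin n → ℝ, (∀ k, 0 < t k ∧ t k ≤ t₀) →
      γ * ∑ k, t k * |ξ k| ^ m ≤ ‖P t ξ‖)
    (α : Fin n → ℝ) (hα : ∀ k, 0 ≤ α k) (hαm : ∑ k, α k ≤ m) :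
    ∃ C > (0 : ℝ), ∀ lam : ℂ, inSector φ₂ lam → ∀ t ξ : Fin n → ℝ,
      (∀ k, 0 < t k ∧ t k ≤ t₀) →
      ∃ B : E →L[ℂ] E,
        (∀ x, B (A x + (lam + P t ξ) • x) = x) ∧
        (∀ x, A (B x) + (lam + P t ξ) • B x = x) ∧
        ∀ u : E,
          (∏ k, t k ^ (α k / m)) * ‖lam‖ ^ (1 - (∑ k, α k) / m) *
              (∏ k, |ξ k| ^ α k) * ‖B u‖ ≤ C * ‖u‖ := by
  have hπ := Real.pi_pos
  have hM : 0 ≤ M := by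
    obtain ⟨B₀, -, -, hB₀⟩ := hpos 0 (Or.inl rfl)
    have := (norm_nonneg B₀).trans hB₀
    simpa using this
  set c : ℝ := Real.cos ((φ₁ + φ₂) / 2) with hcdef
  have hc : 0 < c := Real.cos_pos_of_mem_Ioo ⟨by linarith, by linarith⟩
  set K : ℝ := max 1 γ⁻¹ with hKdef
  have hK1 : 1 ≤ K := le_max_left _ _
  have hKγ : 1 ≤ K * γ := by
    rw [hKdef]
    calc (1:ℝ) = γ⁻¹ * γ := by field_simp
      _ ≤ max 1 γ⁻¹ * γ := mul_le_mul_of_nonneg_right (le_max_right _ _) hγ.le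
  refine ⟨M * K / c + 1, by positivity, ?_⟩
  intro lam hlam t ξ ht
  have hsec := hPsec t ξ ht
  have hlow := hPlow t ξ ht
  obtain ⟨hsum_sec, hsum_abs⟩ := sector_add_s11 hφ₂ hφ₁ (by linarith) hlam hsec
  have hμsec : inSector φ (lam + P t ξ) := by
    rcases hsum_sec with h | h
    · exact Or.inl h
    · exact Or.inr (h.trans (by linarith))
  obtain ⟨B, hB1, hB2, hBn⟩ := hpos _ hμsec
  refine ⟨B, hB1, hB2, ?_⟩
  intro u
  rw [add_comm φ₂ φ₁, ← hcdef] at hsum_abs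
  set μ := lam + P t ξ with hμdef
  set X := ‖lam‖ with hXdef
  set S : ℝ := ∑ k, t k * |ξ k| ^ m with hSdef
  have hX0 : 0 ≤ X := norm_nonneg _
  have htk0 : ∀ k, (0:ℝ) ≤ t k * |ξ k| ^ m := fun k =>
    mul_nonneg (ht k).1.le (Real.rpow_nonneg (abs_nonneg _) _)
  have hS0 : 0 ≤ S := Finset.sum_nonneg fun k _ => htk0 k
  set s : ℝ := (∑ k, α k) / m with hsdef
  have hs0 : 0 ≤ s := div_nonneg (Finset.sum_nonneg fun k _ => hα k) hm.le
  have hs1 : s ≤ 1 := by rw [hsdef, div_le_one hm]; exact hαm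
  -- combine the products
  have hprod : (∏ k, t k ^ (α k / m)) * (∏ k, |ξ k| ^ α k) =
      ∏ k, (t k * |ξ k| ^ m) ^ (α k / m) := by
    rw [← Finset.prod_mul_distrib]
    refine Finset.prod_congr rfl fun k _ => ?_
    rw [Real.mul_rpow (ht k).1.le (Real.rpow_nonneg (abs_nonneg _) _)]
    congr 1
    rw [← Real.rpow_mul (abs_nonneg _)]
    congr 1
    field_simp
  have hle2 : (∏ k, (t k * |ξ k| ^ m) ^ (α k / m)) ≤ S ^ s := by
    calc (∏ k, (t k * |ξ k| ^ m) ^ (α k / m)) ≤ ∏ k, S ^ (α k / m) :=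
          Finset.prod_le_prod (fun k _ => Real.rpow_nonneg (htk0 k) _)
            (fun k _ => Real.rpow_le_rpow (htk0 k)
              (Finset.single_le_sum (fun j _ => htk0 j) (Finset.mem_univ k))
              (div_nonneg (hα k) hm.le))
      _ = S ^ s := by
          rw [hsdef, Finset.sum_div,
            Real.rpow_sum_of_nonneg hS0 (fun k _ => div_nonneg (hα k) hm.le)]
  have hL : (∏ k, t k ^ (α k / m)) * X ^ (1 - s) * (∏ k, |ξ k| ^ α k) ≤ X + S := by
    have hre : (∏ k, t k ^ (α k / m)) * X ^ (1 - s) * (∏ k, |ξ k| ^ α k) =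
        X ^ (1 - s) * ((∏ k, t k ^ (α k / m)) * (∏ k, |ξ k| ^ α k)) := by ring
    rw [hre, hprod]
    calc X ^ (1 - s) * ∏ k, (t k * |ξ k| ^ m) ^ (α k / m)
        ≤ X ^ (1 - s) * S ^ s :=
          mul_le_mul_of_nonneg_left hle2 (Real.rpow_nonneg hX0 _)
      _ ≤ X + S := rpow_weighted hX0 hS0 hs0 hs1
  have hμabs : c * (X + γ * S) ≤ ‖μ‖ := by
    calc c * (X + γ * S) ≤ c * (X + ‖P t ξ‖) := by
          apply mul_le_mul_of_nonneg_left _ hc.le; linarith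
      _ ≤ ‖μ‖ := hsum_abs
  have hden : 0 < 1 + ‖μ‖ := by positivity
  have hBu : ‖B u‖ ≤ M / (1 + ‖μ‖) * ‖u‖ :=
    le_trans (B.le_opNorm u) (mul_le_mul_of_nonneg_right hBn (norm_nonneg u))
  have hXS : X + S ≤ K * (X + γ * S) := by
    nlinarith [mul_le_mul_of_nonneg_right hK1 hX0, mul_le_mul_of_nonneg_right hKγ hS0]
  have hfrac : (X + S) * (M / (1 + ‖μ‖)) ≤ M * K / c + 1 := by
    rw [mul_div_assoc', div_le_iff₀ hden]
    calc (X + S) * M = M * (X + S) := by ring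
      _ ≤ M * (K * (X + γ * S)) := mul_le_mul_of_nonneg_left hXS hM
      _ = (M * K / c) * (c * (X + γ * S)) := by field_simp
      _ ≤ (M * K / c) * ‖μ‖ := mul_le_mul_of_nonneg_left hμabs (by positivity)
      _ ≤ (M * K / c) * (1 + ‖μ‖) :=
          mul_le_mul_of_nonneg_left (by linarith) (by positivity)
      _ ≤ (M * K / c + 1) * (1 + ‖μ‖) :=
          mul_le_mul_of_nonneg_right (by linarith) hden.le
  calc (∏ k, t k ^ (α k / m)) * X ^ (1 - s) * (∏ k, |ξ k| ^ α k) * ‖B u‖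
      ≤ (X + S) * (M / (1 + ‖μ‖) * ‖u‖) :=
        mul_le_mul hL hBu (norm_nonneg _) (by linarith)
    _ = ((X + S) * (M / (1 + ‖μ‖))) * ‖u‖ := by ring
    _ ≤ (M * K / c + 1) * ‖u‖ := mul_le_mul_of_nonneg_right hfrac (norm_nonneg u)
end
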